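/- Let B be a bisimulation on the nodes of a λ-graph G, and let Q be a query on G with Q ⊆ B. Then the propagation Q↓ is a bisimulation. -/
import Mathlib


/-- Directions for paths in a λ-graph. -/
inductive Dir : Type where
  | left | body | right
deriving DecidableEq

/-- Labels of nodes of a (pre–)λ-graph. -/
inductive NodeLabel (Node Name : Type) : Type where
  | app (l r : Node)
  | abs (body : Node)
  | fvar (name : Name)
  | bvar (binder : Node)

/-- The four kinds of nodes. -/
inductive NodeKind : Type where
  | app | abs | fvar | bvar
deriving DecidableEq

/-- The kind of a node label. -/
def NodeLabel.kind {Node Name : Type} : NodeLabel Node Name → NodeKind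
  | .app _ _ => .app
  | .abs _ => .abs
  | .fvar _ => .fvar
  | .bvar _ => .bvar

/-- Locally nameless λ-terms. -/
inductive Term (Name : Type) : Type where
  | bvar (i : ℕ)
  | fvar (a : Name)
  | app (t s : Term Name)
  | lam (t : Term Name)

/-- Reflexive–symmetric–transitive closure `R*` of a relation. -/
inductive RstClosure {α : Type _} (R : α → α → Prop) : α → α → Prop where
  | base {a b : α} : R a b → RstClosure R a b
  | refl (a : α) : RstClosure R a a
  | symm {a b : α} : RstClosure R a b → RstClosure R b a
  | trans {a b c : α} : RstClosure R a b → RstClosure R b c → RstClosure R a c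

/-- A pre–λ-graph: every node carries a label; the binder of a bound variable node is an
abstraction node; the name of a free variable node uniquely identifies it. -/
structure PreLamGraph (Node Name : Type) : Type where
  label : Node → NodeLabel Node Name
  binder_abs : ∀ n l, label n = .bvar l → ∃ b, label l = .abs b
  fvar_inj : ∀ n m a, label n = .fvar a → label m = .fvar a → n = m

namespace PreLamGraph

variable {Node Name : Type}

/-- `Path G τ n m`: there is a path from `n` to `m` with trace `τ`
(binding edges are never followed). -/
inductive Path (G : PreLamGraph Node Name) : List Dir → Node → Node → Prop where
  | nil (n : Node) : Path G [] n n
  | abs {τ : List Dir} {n m b : Node} :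
      Path G τ n m → G.label m = .abs b → Path G (.body :: τ) n b
  | appL {τ : List Dir} {n m l r : Node} :
      Path G τ n m → G.label m = .app l r → Path G (.left :: τ) n l
  | appR {τ : List Dir} {n m l r : Node} :
      Path G τ n m → G.label m = .app l r → Path G (.right :: τ) n r

/-- `r` is a root: the only path ending at `r` is the empty path from `r` itself. -/
def Root (G : PreLamGraph Node Name) (r : Node) : Prop :=
  ∀ (τ : List Dir) (n : Node), G.Path τ n r → τ = []

/-- `Crosses G τ n p`: the path from `n` with trace `τ` crosses the node `p`. -/
inductive Crosses (G : PreLamGraph Node Name) : List Dir → Node → Node → Prop where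
  | here {τ : List Dir} {n p : Node} : G.Path τ n p → Crosses G τ n p
  | step {d : Dir} {τ : List Dir} {n p m : Node} :
      Crosses G τ n p → G.Path (d :: τ) n m → Crosses G (d :: τ) n p

/-- `m` dominates `n`: every path from a root to `n` crosses `m`. -/
def Dominates (G : PreLamGraph Node Name) (m n : Node) : Prop :=
  ∀ (r : Node) (τ : List Dir), G.Root r → G.Path τ r n → G.Crosses τ r m

/-- Acyclicity: a path from a node to itself must have empty trace. -/
def Acyclic (G : PreLamGraph Node Name) : Prop :=
  ∀ (n : Node) (τ : List Dir), G.Path τ n n → τ = []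

/-- Every bound variable node is dominated by its binder. -/
def Dominated (G : PreLamGraph Node Name) : Prop :=
  ∀ (n l : Node), G.label n = .bvar l → G.Dominates l n

/-- A query relates only root nodes. -/
def IsQuery (G : PreLamGraph Node Name) (Q : Node → Node → Prop) : Prop :=
  ∀ n m, Q n m → G.Root n ∧ G.Root m

/-- A relation is homogeneous if it only relates nodes of the same kind. -/
def Homogeneous (G : PreLamGraph Node Name) (R : Node → Node → Prop) : Prop :=
  ∀ n m, R n m → (G.label n).kind = (G.label m).kind

/-- Closure under the left propagation rule. -/
def ClosedAppL (G : PreLamGraph Node Name) (R : Node → Node → Prop) : Prop :=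
  ∀ n m n1 n2 m1 m2, G.label n = .app n1 n2 → G.label m = .app m1 m2 → R n m → R n1 m1

/-- Closure under the right propagation rule. -/
def ClosedAppR (G : PreLamGraph Node Name) (R : Node → Node → Prop) : Prop :=
  ∀ n m n1 n2 m1 m2, G.label n = .app n1 n2 → G.label m = .app m1 m2 → R n m → R n2 m2

/-- Closure under the body propagation rule. -/
def ClosedAbs (G : PreLamGraph Node Name) (R : Node → Node → Prop) : Prop :=
  ∀ n m n' m', G.label n = .abs n' → G.label m = .abs m' → R n m → R n' m'

/-- Closure under the scoping rule. -/
def ClosedScope (G : PreLamGraph Node Name) (R : Node → Node → Prop) : Prop :=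
  ∀ n m l l', G.label n = .bvar l → G.label m = .bvar l' → R n m → R l l'

/-- Closure under the three propagation rules. -/
def ClosedProp (G : PreLamGraph Node Name) (R : Node → Node → Prop) : Prop :=
  G.ClosedAppL R ∧ G.ClosedAppR R ∧ G.ClosedAbs R

/-- A blind bisimulation is a homogeneous relation closed under the propagation rules. -/
def BlindBisimulation (G : PreLamGraph Node Name) (R : Node → Node → Prop) : Prop :=
  G.Homogeneous R ∧ G.ClosedProp R

/-- A bisimulation is a homogeneous relation closed under the propagation rules
and the scoping rule. -/
def Bisimulation (G : PreLamGraph Node Name) (R : Node → Node → Prop) : Prop :=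
  G.BlindBisimulation R ∧ G.ClosedScope R

/-- A relation is open if whenever it relates two free variable nodes they are equal. -/
def OpenRel (G : PreLamGraph Node Name) (R : Node → Node → Prop) : Prop :=
  ∀ n m a b, G.label n = .fvar a → G.label m = .fvar b → R n m → n = m

/-- A sharing equivalence is an open bisimulation that is also an equivalence relation. -/
def SharingEquivalence (G : PreLamGraph Node Name) (R : Node → Node → Prop) : Prop :=
  G.OpenRel R ∧ G.Bisimulation R ∧ Equivalence R

/-- A blind sharing equivalence is an equivalence relation that is a blind bisimulation. -/
def BlindSharingEquivalence (G : PreLamGraph Node Name) (R : Node → Node → Prop) : Prop :=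
  Equivalence R ∧ G.BlindBisimulation R

/-- The propagation `R↓`: the smallest relation containing `R` and closed under the
propagation rules. -/
inductive Propagation (G : PreLamGraph Node Name) (R : Node → Node → Prop) :
    Node → Node → Prop where
  | base {n m : Node} : R n m → Propagation G R n m
  | appL {n m n1 n2 m1 m2 : Node} :
      Propagation G R n m → G.label n = .app n1 n2 → G.label m = .app m1 m2 →
      Propagation G R n1 m1
  | appR {n m n1 n2 m1 m2 : Node} :
      Propagation G R n m → G.label n = .app n1 n2 → G.label m = .app m1 m2 →
      Propagation G R n2 m2
  | abs {n m n' m' : Node} :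
      Propagation G R n m → G.label n = .abs n' → G.label m = .abs m' →
      Propagation G R n' m'

/-- The spreading `R⇓`: the smallest equivalence relation containing `R` and closed
under the propagation rules. -/
inductive Spreading (G : PreLamGraph Node Name) (R : Node → Node → Prop) :
    Node → Node → Prop where
  | base {n m : Node} : R n m → Spreading G R n m
  | refl (n : Node) : Spreading G R n n
  | symm {n m : Node} : Spreading G R n m → Spreading G R m n
  | trans {n m p : Node} : Spreading G R n m → Spreading G R m p → Spreading G R n p
  | appL {n m n1 n2 m1 m2 : Node} :
      Spreading G R n m → G.label n = .app n1 n2 → G.label m = .app m1 m2 →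
      Spreading G R n1 m1
  | appR {n m n1 n2 m1 m2 : Node} :
      Spreading G R n m → G.label n = .app n1 n2 → G.label m = .app m1 m2 →
      Spreading G R n2 m2
  | abs {n m n' m' : Node} :
      Spreading G R n m → G.label n = .abs n' → G.label m = .abs m' →
      Spreading G R n' m'

/-- `IndexOf G l n τ k`: the de Bruijn index of the abstraction node `l` along the path
from `n` with trace `τ` (which crosses `l`) is `k`. -/
inductive IndexOf (G : PreLamGraph Node Name) (l n : Node) : List Dir → ℕ → Prop where
  | here {τ : List Dir} : G.Path τ n l → IndexOf G l n τ 0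
  | abs {d : Dir} {τ : List Dir} {m b : Node} {k : ℕ} :
      G.Path (d :: τ) n m → G.label m = .abs b → m ≠ l →
      IndexOf G l n τ k → IndexOf G l n (d :: τ) (k + 1)
  | other {d : Dir} {τ : List Dir} {m : Node} {k : ℕ} :
      G.Path (d :: τ) n m → (∀ b, G.label m ≠ .abs b) →
      IndexOf G l n τ k → IndexOf G l n (d :: τ) k

/-- `Readback G r τ t`: the readback of the endpoint of the access path from `r` with
trace `τ` is the locally nameless term `t`. -/
inductive Readback (G : PreLamGraph Node Name) (r : Node) : List Dir → Term Name → Prop where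
  | bvar {τ : List Dir} {n l : Node} {k : ℕ} :
      G.Path τ r n → G.label n = .bvar l → G.IndexOf l r τ k →
      Readback G r τ (.bvar k)
  | fvar {τ : List Dir} {n : Node} {a : Name} :
      G.Path τ r n → G.label n = .fvar a → Readback G r τ (.fvar a)
  | abs {τ : List Dir} {n b : Node} {t : Term Name} :
      G.Path τ r n → G.label n = .abs b → Readback G r (.body :: τ) t →
      Readback G r τ (.lam t)
  | app {τ : List Dir} {n n1 n2 : Node} {t1 t2 : Term Name} :
      G.Path τ r n → G.label n = .app n1 n2 →
      Readback G r (.left :: τ) t1 → Readback G r (.right :: τ) t2 →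
      Readback G r τ (.app t1 t2)

end PreLamGraph

/-- A λ-graph: a finite, acyclic and dominated pre–λ-graph. -/
structure LamGraph (Node Name : Type) extends PreLamGraph Node Name where
  finite : Finite Node
  acyclic : toPreLamGraph.Acyclic
  dominated : toPreLamGraph.Dominated
section Aux

open PreLamGraph

variable {Node Name : Type} {G : PreLamGraph Node Name} {B Q : Node → Node → Prop}

lemma path_det : ∀ {τ : List Dir} {n a b : Node},
    G.Path τ n a → G.Path τ n b → a = b := by
  intro τ n a b h1
  induction h1 generalizing b with
  | nil => intro h2; cases h2; rfl
  | abs hp hl ih =>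
    intro h2
    cases h2 with
    | abs hp' hl' =>
      have := ih hp'; subst this; rw [hl] at hl'; cases hl'; rfl
  | appL hp hl ih =>
    intro h2
    cases h2 with
    | appL hp' hl' =>
      have := ih hp'; subst this; rw [hl] at hl'; cases hl'; rfl
  | appR hp hl ih =>
    intro h2
    cases h2 with
    | appR hp' hl' =>
      have := ih hp'; subst this; rw [hl] at hl'; cases hl'; rfl

lemma path_comp : ∀ {σ ρ : List Dir} {a b c : Node},
    G.Path σ a b → G.Path ρ b c → G.Path (ρ ++ σ) a c := by
  intro σ ρ a b c h1 h2
  induction h2 with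
  | nil => simpa using h1
  | abs hp hl ih => exact Path.abs (ih h1) hl
  | appL hp hl ih => exact Path.appL (ih h1) hl
  | appR hp hl ih => exact Path.appR (ih h1) hl

lemma path_decomp : ∀ {ρ σ : List Dir} {a c : Node},
    G.Path (ρ ++ σ) a c → ∃ b, G.Path σ a b ∧ G.Path ρ b c := by
  intro ρ
  induction ρ with
  | nil => intro σ a c h; exact ⟨c, by simpa using h, Path.nil c⟩
  | cons d ρ ih =>
    intro σ a c h
    cases h with
    | abs hp hl =>
      obtain ⟨b, hb1, hb2⟩ := ih hp
      exact ⟨b, hb1, Path.abs hb2 hl⟩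
    | appL hp hl =>
      obtain ⟨b, hb1, hb2⟩ := ih hp
      exact ⟨b, hb1, Path.appL hb2 hl⟩
    | appR hp hl =>
      obtain ⟨b, hb1, hb2⟩ := ih hp
      exact ⟨b, hb1, Path.appR hb2 hl⟩

lemma crosses_decomp {τ : List Dir} {n p : Node} (h : G.Crosses τ n p) :
    ∃ ρ σ, τ = ρ ++ σ ∧ G.Path σ n p := by
  induction h with
  | here hp => exact ⟨[], _, by simp, hp⟩
  | @step d τ n p m _ _ ih =>
    obtain ⟨ρ, σ, hτ, hp⟩ := ih
    exact ⟨d :: ρ, σ, by simp [hτ], hp⟩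

lemma kind_abs {lb : NodeLabel Node Name} (h : lb.kind = .abs) : ∃ b, lb = .abs b := by
  cases lb <;> simp_all [NodeLabel.kind]

lemma kind_app {lb : NodeLabel Node Name} (h : lb.kind = .app) : ∃ l r, lb = .app l r := by
  cases lb <;> simp_all [NodeLabel.kind]

/-- transfer a path along a homogeneous, propagation-closed relation -/
lemma transfer (hH : G.Homogeneous B) (hP : G.ClosedProp B) :
    ∀ {π : List Dir} {a c : Node}, G.Path π a c → ∀ {b : Node}, B a b →
      ∃ d, G.Path π b d ∧ B c d := by
  intro π a c h
  induction h with
  | nil => intro b hab; exact ⟨b, Path.nil b, hab⟩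
  | @abs τ n m bb hp hl ih =>
    intro b hab
    obtain ⟨d, hd1, hd2⟩ := ih hab
    have hk := hH _ _ hd2
    rw [hl] at hk
    obtain ⟨b', hb'⟩ := kind_abs hk.symm
    exact ⟨b', Path.abs hd1 hb', hP.2.2 _ _ _ _ hl hb' hd2⟩
  | @appL τ n m l r hp hl ih =>
    intro b hab
    obtain ⟨d, hd1, hd2⟩ := ih hab
    have hk := hH _ _ hd2
    rw [hl] at hk
    obtain ⟨l', r', hb'⟩ := kind_app hk.symm
    exact ⟨l', Path.appL hd1 hb', hP.1 _ _ _ _ _ _ hl hb' hd2⟩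
  | @appR τ n m l r hp hl ih =>
    intro b hab
    obtain ⟨d, hd1, hd2⟩ := ih hab
    have hk := hH _ _ hd2
    rw [hl] at hk
    obtain ⟨l', r', hb'⟩ := kind_app hk.symm
    exact ⟨r', Path.appR hd1 hb', hP.2.1 _ _ _ _ _ _ hl hb' hd2⟩

lemma flip_homog (h : G.Homogeneous B) : G.Homogeneous (fun a b => B b a) :=
  fun n m hnm => (h m n hnm).symm

lemma flip_closedProp (h : G.ClosedProp B) : G.ClosedProp (fun a b => B b a) :=
  ⟨fun n m n1 n2 m1 m2 hn hm hr => h.1 m n m1 m2 n1 n2 hm hn hr,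
   fun n m n1 n2 m1 m2 hn hm hr => h.2.1 m n m1 m2 n1 n2 hm hn hr,
   fun n m n' m' hn hm hr => h.2.2 m n m' n' hm hn hr⟩

/-- no node can be related to some `b` together with a proper descendant of itself -/
lemma no_chain (hfin : Finite Node) (hac : G.Acyclic)
    (hH : G.Homogeneous B) (hP : G.ClosedProp B)
    {δ : List Dir} (hδ : δ ≠ []) {a a' b : Node}
    (hp : G.Path δ a a') (h1 : B a b) (h2 : B a' b) : False := by
  classical
  -- step lemma
  have step : ∀ a a' b : Node, G.Path δ a a' → B a b → B a' b →
      ∃ a'' b', G.Path δ a' a'' ∧ B a' b' ∧ B a'' b' := by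
    intro a a' b hp h1 h2
    obtain ⟨b', hb'1, hb'2⟩ := transfer hH hP hp h1
    -- B a' b' with path δ b b'
    obtain ⟨a'', ha''1, ha''2⟩ := transfer (flip_homog hH) (flip_closedProp hP) hb'1 h2
    exact ⟨a'', b', ha''1, hb'2, ha''2⟩
  -- build the infinite chain
  let T := {p : Node × Node × Node //
    G.Path δ p.1 p.2.1 ∧ B p.1 p.2.2 ∧ B p.2.1 p.2.2}
  have stepT : ∀ t : T, ∃ t' : T, t'.1.1 = t.1.2.1 := by
    rintro ⟨⟨a, a', b⟩, hp, h1, h2⟩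
    obtain ⟨a'', b', hq, k1, k2⟩ := step a a' b hp h1 h2
    exact ⟨⟨(a', a'', b'), hq, k1, k2⟩, rfl⟩
  choose f hf using stepT
  let g : ℕ → T := fun k => Nat.rec ⟨(a, a', b), hp, h1, h2⟩ (fun _ t => f t) k
  have hglink : ∀ k, (g (k + 1)).1.1 = (g k).1.2.1 := fun k => hf (g k)
  let seq : ℕ → Node := fun k => (g k).1.1
  have hstep : ∀ k, G.Path δ (seq k) (seq (k + 1)) := by
    intro k
    have := (g k).2.1
    simpa [seq, hglink k] using this
  have hpow : ∀ k i, ∃ τ, G.Path τ (seq i) (seq (i + k)) ∧ (k ≠ 0 → τ ≠ []) := by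
    intro k
    induction k with
    | zero => intro i; exact ⟨[], Path.nil _, by simp⟩
    | succ k ih =>
      intro i
      obtain ⟨τ, hτ, _⟩ := ih i
      refine ⟨δ ++ τ, ?_, ?_⟩
      · have := path_comp hτ (hstep (i + k))
        simpa [Nat.add_assoc] using this
      · intro _; simp [hδ]
  obtain ⟨i, j, hne, heq⟩ := Finite.exists_ne_map_eq_of_infinite seq
  rcases hne.lt_or_gt with hij | hij
  · obtain ⟨τ, hτ, hτne⟩ := hpow (j - i) i
    rw [Nat.add_sub_cancel' hij.le] at hτ
    rw [← heq] at hτ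
    exact hτne (by omega) (hac _ _ hτ)
  · obtain ⟨τ, hτ, hτne⟩ := hpow (i - j) j
    rw [Nat.add_sub_cancel' hij.le] at hτ
    rw [heq] at hτ
    exact hτne (by omega) (hac _ _ hτ)

lemma prop_sub (hH : G.Homogeneous B) (hP : G.ClosedProp B) (hQB : ∀ n m, Q n m → B n m) :
    ∀ {n m : Node}, Propagation G Q n m → B n m := by
  intro n m h
  induction h with
  | base h => exact hQB _ _ h
  | appL _ hn hm ih => exact hP.1 _ _ _ _ _ _ hn hm ih
  | appR _ hn hm ih => exact hP.2.1 _ _ _ _ _ _ hn hm ih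
  | abs _ hn hm ih => exact hP.2.2 _ _ _ _ hn hm ih

lemma prop_paths : ∀ {n m : Node}, Propagation G Q n m →
    ∃ τ r r', Q r r' ∧ G.Path τ r n ∧ G.Path τ r' m := by
  intro n m h
  induction h with
  | base h => exact ⟨[], _, _, h, Path.nil _, Path.nil _⟩
  | appL _ hn hm ih =>
    obtain ⟨τ, r, r', hq, h1, h2⟩ := ih
    exact ⟨.left :: τ, r, r', hq, Path.appL h1 hn, Path.appL h2 hm⟩
  | appR _ hn hm ih =>
    obtain ⟨τ, r, r', hq, h1, h2⟩ := ih
    exact ⟨.right :: τ, r, r', hq, Path.appR h1 hn, Path.appR h2 hm⟩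
  | abs _ hn hm ih =>
    obtain ⟨τ, r, r', hq, h1, h2⟩ := ih
    exact ⟨.body :: τ, r, r', hq, Path.abs h1 hn, Path.abs h2 hm⟩

lemma prop_of_paths : ∀ {τ : List Dir} {r n r' m : Node},
    Propagation G Q r r' → G.Path τ r n → G.Path τ r' m → Propagation G Q n m := by
  intro τ r n r' m hq h1
  induction h1 generalizing m with
  | nil => intro h2; cases h2; exact hq
  | abs hp hl ih =>
    intro h2
    cases h2 with
    | abs hp' hl' => exact Propagation.abs (ih hq hp') hl hl'
  | appL hp hl ih =>
    intro h2
    cases h2 with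
    | appL hp' hl' => exact Propagation.appL (ih hq hp') hl hl'
  | appR hp hl ih =>
    intro h2
    cases h2 with
    | appR hp' hl' => exact Propagation.appR (ih hq hp') hl hl'

lemma append_cases : ∀ {ρ ρ' σ σ' : List Dir}, ρ ++ σ = ρ' ++ σ' →
    (∃ δ, σ' = δ ++ σ) ∨ (∃ δ, σ = δ ++ σ') := by
  intro ρ
  induction ρ with
  | nil =>
    intro ρ' σ σ' h
    exact Or.inr ⟨ρ', by simpa using h⟩
  | cons d ρ ih =>
    intro ρ' σ σ' h
    cases ρ' with
    | nil => exact Or.inl ⟨d :: ρ, by simpa using h.symm⟩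
    | cons d' ρ' =>
      simp only [List.cons_append, List.cons.injEq] at h
      exact ih h.2

end Aux

open PreLamGraph in
/-- if a bisimulation contains the query `Q`, then `Q↓` is a bisimulation. -/
theorem propagation_is_bisimulation {Node Name : Type} (G : LamGraph Node Name)
    (B Q : Node → Node → Prop) (hB : G.toPreLamGraph.Bisimulation B)
    (hQ : G.toPreLamGraph.IsQuery Q) (hQB : ∀ n m, Q n m → B n m) :
    G.toPreLamGraph.Bisimulation (Propagation G.toPreLamGraph Q) := by
  obtain ⟨⟨hH, hP⟩, hS⟩ := hB
  have hsub : ∀ n m, Propagation G.toPreLamGraph Q n m → B n m :=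
    fun n m h => prop_sub hH hP hQB h
  refine ⟨⟨fun n m h => hH n m (hsub n m h),
    fun n m n1 n2 m1 m2 hn hm h => Propagation.appL h hn hm,
    fun n m n1 n2 m1 m2 hn hm h => Propagation.appR h hn hm,
    fun n m n' m' hn hm h => Propagation.abs h hn hm⟩, ?_⟩
  -- scoping rule
  intro n m l l' hn hm h
  obtain ⟨τ, r, r', hq, hpn, hpm⟩ := prop_paths h
  obtain ⟨hr, hr'⟩ := hQ r r' hq
  have hBll' : B l l' := hS n m l l' hn hm (hsub n m h)
  -- l dominates n, l' dominates m
  obtain ⟨ρ, σ, hτ1, hσ⟩ := crosses_decomp (G.dominated n l hn r τ hr hpn)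
  obtain ⟨ρ', σ', hτ2, hσ'⟩ := crosses_decomp (G.dominated m l' hm r' τ hr' hpm)
  rcases append_cases (hτ1 ▸ hτ2 : ρ ++ σ = ρ' ++ σ') with ⟨δ, hδ⟩ | ⟨δ, hδ⟩
  · -- σ' = δ ++ σ
    subst hδ
    cases δ with
    | nil =>
      -- same position: the node at σ on the right is l'
      simp only [List.nil_append] at hσ'
      exact prop_of_paths (Propagation.base hq) hσ hσ'
    | cons d δ =>
      -- l' strictly below the matching node: contradiction
      exfalso
      obtain ⟨x, hx1, hx2⟩ := path_decomp hσ'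
      -- node at σ' on the left
      rw [hτ2] at hpn
      obtain ⟨y, hy1, hy2⟩ := path_decomp hpn
      obtain ⟨l₀, hl₀1, hl₀2⟩ := path_decomp hy1
      have : l₀ = l := path_det hl₀1 hσ
      subst this
      have hByl' : B y l' := hsub _ _ (prop_of_paths (Propagation.base hq) hy1 hσ')
      exact no_chain G.finite G.acyclic hH hP (by simp) hl₀2 hBll' hByl'
  · -- σ = δ ++ σ'
    subst hδ
    cases δ with
    | nil =>
      simp only [List.nil_append] at hσ
      exact prop_of_paths (Propagation.base hq) hσ hσ'
    | cons d δ =>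
      exfalso
      obtain ⟨y, hy1, hy2⟩ := path_decomp hσ
      -- node at σ on the right
      rw [hτ1] at hpm
      obtain ⟨x, hx1, hx2⟩ := path_decomp hpm
      obtain ⟨l₀, hl₀1, hl₀2⟩ := path_decomp hx1
      have : l₀ = l' := path_det hl₀1 hσ'
      subst this
      have hBlx : B l x := hsub _ _ (prop_of_paths (Propagation.base hq) hσ hx1)
      exact no_chain G.finite G.acyclic (flip_homog hH) (flip_closedProp hP)
        (by simp) hl₀2 hBll' hBlx
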